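/- Let (aₙ) ∈ ℓ¹ with ‖(aₙ)‖₁ = 1 and 1/2 < sup_n |aₙ| < 1. Then the hyperplane Y = ker((aₙ)) in c₀ (kernel of the functional x ↦ Σ aₙ xₙ) does not have property-(HB) in c₀: the metric projection P_{Y⊥} onto Y⊥ = span{(aₙ)} in ℓ¹, given by P_{Y⊥}((xₙ)) = (x_N/a_N)(a₁, a₂, …) where N is the unique index with |a_N| > 1/2, has norm strictly greater than 1. -/

import Mathlib

open NormedSpace Metric Set

namespace Paper

variable {X : Type*} [NormedAddCommGroup X] [NormedSpace ℝ X]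

/-- The restriction of a continuous linear functional to a subspace. -/
noncomputable def restr (Y : Submodule ℝ X) (f : StrongDual ℝ X) : StrongDual ℝ ↥Y :=
  f.comp Y.subtypeL

/-- The annihilator `Y⊥` of a subspace `Y` in the dual. -/
def ann (Y : Submodule ℝ X) : Set (StrongDual ℝ X) := {f | ∀ y ∈ Y, f y = 0}

/-- The set of norm-preserving (Hahn–Banach) extensions of `g : Y* ` to `X`. -/
def HB (Y : Submodule ℝ X) (g : StrongDual ℝ ↥Y) : Set (StrongDual ℝ X) :=
  {f | (∀ y : Y, f (y : X) = g y) ∧ ‖f‖ = ‖g‖}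

/-- Best approximations to `x` from a set `A`. -/
def bestApprox {E : Type*} [NormedAddCommGroup E] (A : Set E) (x : E) : Set E :=
  {z ∈ A | ‖x - z‖ = infDist x A}

/-- Property-(U): every functional on `Y` has a unique norm-preserving extension to `X`. -/
def propU (Y : Submodule ℝ X) : Prop :=
  ∀ g : StrongDual ℝ ↥Y, ∃! f : StrongDual ℝ X, f ∈ HB Y g

/-- `Y# `: the set of functionals whose norm equals the norm of their restriction to `Y`. -/
def sharp (Y : Submodule ℝ X) : Set (StrongDual ℝ X) := {f | ‖f‖ = ‖restr Y f‖}

/-- Property-(HB), stated via the decomposition `X* = Y# ⊕ Y⊥`. -/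
def propHB (Y : Submodule ℝ X) : Prop :=
  (∀ f ∈ sharp Y, ∀ g ∈ sharp Y, f + g ∈ sharp Y) ∧
  (∀ (c : ℝ), ∀ f ∈ sharp Y, c • f ∈ sharp Y) ∧
  (∀ f : StrongDual ℝ X, ∃ g ∈ sharp Y, ∃ h ∈ ann Y, f = g + h) ∧
  (∀ g ∈ sharp Y, ∀ h ∈ ann Y, h ≠ 0 → ‖g‖ < ‖g + h‖ ∧ ‖h‖ ≤ ‖g + h‖)

end Paper

open Paper

open ZeroAtInfty

/-! Property-(HB) would split the evaluation functional `δ_N` as `g + c • f` with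
`‖c • f‖ ≤ ‖δ_N‖ = 1`, i.e. `|c| ≤ 1`, and `‖g‖ = ‖δ_N|_Y‖ ≤ ‖δ_N - f / a_N‖ = (1 - |a_N|) / |a_N|`.
Since `c₀* = ℓ¹` isometrically, `‖δ_N - c • f‖ = |1 - c a_N| + |c| (1 - |a_N|) ≥ 2 (1 - |a_N|)`
for `|c| ≤ 1`, and this exceeds `(1 - |a_N|) / |a_N|` exactly when `1/2 < |a_N| < 1`. -/

namespace Paper

variable {X : Type*} [NormedAddCommGroup X] [NormedSpace ℝ X] {Y : Submodule ℝ X}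

theorem norm_restr_le (Y : Submodule ℝ X) (φ : StrongDual ℝ X) : ‖restr Y φ‖ ≤ ‖φ‖ :=
  (φ.opNorm_comp_le Y.subtypeL).trans (mul_le_of_le_one_right (norm_nonneg φ) Y.norm_subtypeL_le)

theorem restr_sub_of_mem_ann {φ h : StrongDual ℝ X} (hh : h ∈ ann Y) :
    restr Y (φ - h) = restr Y φ := by
  ext y
  simp [restr, hh y y.2]

theorem exists_eq_smul_of_mem_ann_ker {f h : StrongDual ℝ X}
    (hh : h ∈ ann (LinearMap.ker (f : X →ₗ[ℝ] ℝ))) : ∃ c : ℝ, h = c • f := by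
  have hspan : (h : X →ₗ[ℝ] ℝ) ∈ Submodule.span ℝ (range fun _ : Unit ↦ (f : X →ₗ[ℝ] ℝ)) :=
    mem_span_of_iInf_ker_le_ker fun x hx ↦ hh x (by simpa using hx)
  rw [range_const, Submodule.mem_span_singleton] at hspan
  obtain ⟨c, hc⟩ := hspan
  exact ⟨c, ContinuousLinearMap.coe_injective hc.symm⟩

theorem propHB.exists_mem_ann (hY : propHB Y) (φ : StrongDual ℝ X) :
    ∃ h ∈ ann Y, ‖φ - h‖ = ‖restr Y φ‖ ∧ ‖h‖ ≤ ‖φ‖ := by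
  obtain ⟨-, -, hdecomp, hnorm⟩ := hY
  obtain ⟨g, hg, h, hh, rfl⟩ := hdecomp φ
  refine ⟨h, hh, ?_, ?_⟩
  · have hrestr : restr Y (g + h) = restr Y g := by
      rw [← restr_sub_of_mem_ann (φ := g + h) hh, add_sub_cancel_right]
    rw [add_sub_cancel_right, hg, hrestr]
  · rcases eq_or_ne h 0 with rfl | hne
    · simp
    · exact (hnorm g hg h hh hne).2

end Paper

namespace ZeroAtInftyContinuousMap

variable {α β : Type*} [TopologicalSpace α]

theorem norm_apply_le [SeminormedAddCommGroup β] (f : C₀(α, β)) (x : α) : ‖f x‖ ≤ ‖f‖ := by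
  rw [← norm_toBCF_eq_norm]
  exact f.toBCF.norm_coe_le_norm x

theorem norm_le_of_forall_norm_apply_le [NormedAddCommGroup β] (f : C₀(α, β)) {C : ℝ} (hC : 0 ≤ C)
    (h : ∀ x, ‖f x‖ ≤ C) : ‖f‖ ≤ C := by
  rw [← norm_toBCF_eq_norm]
  exact (BoundedContinuousFunction.norm_le hC).mpr h

variable [DiscreteTopology α] [Zero β] [TopologicalSpace β]

noncomputable def finsetIndicator (s : Finset α) (u : α → β) : C₀(α, β) where
  toFun := (s : Set α).indicator u
  continuous_toFun := continuous_of_discreteTopology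
  zero_at_infty' := by
    rw [Filter.cocompact_eq_cofinite]
    exact tendsto_const_nhds.congr'
      (s.finite_toSet.eventually_cofinite_notMem.mono fun _ hx ↦
        (Set.indicator_of_notMem hx u).symm)

@[simp]
theorem finsetIndicator_apply (s : Finset α) (u : α → β) (x : α) :
    finsetIndicator s u x = (s : Set α).indicator u x :=
  rfl

end ZeroAtInftyContinuousMap

open ZeroAtInftyContinuousMap

section SummableDual

variable {b : ℕ → ℝ}

theorem summable_mul_apply (hb : Summable fun n ↦ |b n|) (x : C₀(ℕ, ℝ)) :
    Summable fun n ↦ b n * x n :=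
  (hb.mul_right ‖x‖).of_norm_bounded fun n ↦ by
    rw [norm_mul, Real.norm_eq_abs]
    exact mul_le_mul_of_nonneg_left (x.norm_apply_le n) (abs_nonneg _)

theorem abs_tsum_mul_apply_le (hb : Summable fun n ↦ |b n|) (x : C₀(ℕ, ℝ)) :
    |∑' n, b n * x n| ≤ (∑' n, |b n|) * ‖x‖ := by
  rw [← tsum_mul_right, ← Real.norm_eq_abs]
  refine tsum_of_norm_bounded (hb.mul_right ‖x‖).hasSum fun n ↦ ?_
  rw [norm_mul, Real.norm_eq_abs]
  exact mul_le_mul_of_nonneg_left (x.norm_apply_le n) (abs_nonneg _)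

noncomputable def tsumMulCLM (b : ℕ → ℝ) (hb : Summable fun n ↦ |b n|) : StrongDual ℝ C₀(ℕ, ℝ) :=
  LinearMap.mkContinuous
    { toFun := fun x ↦ ∑' n, b n * x n
      map_add' := fun x y ↦ by
        simp only [ZeroAtInftyContinuousMap.add_apply, mul_add]
        exact (summable_mul_apply hb x).tsum_add (summable_mul_apply hb y)
      map_smul' := fun c x ↦ by
        simp only [ZeroAtInftyContinuousMap.smul_apply, smul_eq_mul, RingHom.id_apply,
          ← tsum_mul_left]
        congr 1 with n
        ring }
    (∑' n, |b n|) (abs_tsum_mul_apply_le hb)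

theorem tsumMulCLM_apply (hb : Summable fun n ↦ |b n|) (x : C₀(ℕ, ℝ)) :
    tsumMulCLM b hb x = ∑' n, b n * x n :=
  rfl

theorem norm_tsumMulCLM (hb : Summable fun n ↦ |b n|) : ‖tsumMulCLM b hb‖ = ∑' n, |b n| := by
  refine le_antisymm (LinearMap.mkContinuous_norm_le _ (tsum_nonneg fun _ ↦ abs_nonneg _) _) ?_
  refine Real.tsum_le_of_sum_le (fun _ ↦ abs_nonneg _) fun s ↦ ?_
  set x := finsetIndicator s fun n ↦ (SignType.sign (b n) : ℝ)
  have hx : ‖x‖ ≤ 1 := norm_le_of_forall_norm_apply_le x zero_le_one fun n ↦ by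
    by_cases hn : n ∈ s
    · rcases lt_trichotomy (b n) 0 with h | h | h <;> simp [x, hn, sign_neg, sign_pos, h]
    · simp [x, hn]
  have hφx : tsumMulCLM b hb x = ∑ n ∈ s, |b n| := by
    rw [tsumMulCLM_apply, tsum_eq_sum (s := s) fun n hn ↦ by simp [x, hn]]
    exact Finset.sum_congr rfl fun n hn ↦ by simp [x, hn]
  calc ∑ n ∈ s, |b n| ≤ ‖tsumMulCLM b hb x‖ := hφx ▸ le_abs_self _
    _ ≤ ‖tsumMulCLM b hb‖ * ‖x‖ := (tsumMulCLM b hb).le_opNorm x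
    _ ≤ ‖tsumMulCLM b hb‖ := mul_le_of_le_one_right (ContinuousLinearMap.opNorm_nonneg _) hx

theorem tsumMulCLM_sub_smul {b' : ℕ → ℝ} (hb : Summable fun n ↦ |b n|)
    (hb' : Summable fun n ↦ |b' n|) (c : ℝ) (hbb' : Summable fun n ↦ |b n - c * b' n|) :
    tsumMulCLM b hb - c • tsumMulCLM b' hb' = tsumMulCLM (fun n ↦ b n - c * b' n) hbb' := by
  ext x
  simp only [_root_.sub_apply, _root_.smul_apply, tsumMulCLM_apply,
    smul_eq_mul, sub_mul, mul_assoc]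
  rw [(summable_mul_apply hb x).tsum_sub ((summable_mul_apply hb' x).mul_left c), tsum_mul_left]

theorem summable_abs_single (N : ℕ) : Summable fun n ↦ |Pi.single N (1 : ℝ) n| :=
  summable_of_ne_finset_zero (s := {N}) fun n hn ↦ by simp_all

noncomputable def diracCLM (N : ℕ) : StrongDual ℝ C₀(ℕ, ℝ) :=
  tsumMulCLM (Pi.single N 1) (summable_abs_single N)

theorem norm_diracCLM (N : ℕ) : ‖diracCLM N‖ = 1 := by
  rw [diracCLM, norm_tsumMulCLM, tsum_eq_single N fun n hn ↦ by simp [hn]]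
  simp

theorem hasSum_abs_single_sub_mul {B : ℝ} (hb : HasSum (fun n ↦ |b n|) B) (N : ℕ) (c : ℝ) :
    HasSum (fun n ↦ |(Pi.single N 1 : ℕ → ℝ) n - c * b n|) (|1 - c * b N| + |c| * (B - |b N|)) := by
  have hfun : (fun n ↦ |(Pi.single N 1 : ℕ → ℝ) n - c * b n|) =
      Function.update (fun n ↦ |c| * |b n|) N |1 - c * b N| := by
    ext n
    rcases eq_or_ne n N with rfl | hn <;> simp [abs_mul, *]
  rw [hfun, show |1 - c * b N| + |c| * (B - |b N|) = |1 - c * b N| - |c| * |b N| + |c| * B by ring]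
  exact (hb.mul_left |c|).update N _

theorem norm_diracCLM_sub_smul {B : ℝ} (hb : HasSum (fun n ↦ |b n|) B) (N : ℕ) (c : ℝ) :
    ‖diracCLM N - c • tsumMulCLM b hb.summable‖ =
      |1 - c * b N| + |c| * (B - |b N|) := by
  have h := hasSum_abs_single_sub_mul hb N c
  rw [diracCLM, tsumMulCLM_sub_smul _ _ c h.summable, norm_tsumMulCLM, h.tsum_eq]

end SummableDual

theorem one_sub_div_lt_abs_one_sub_mul_add {x c : ℝ} (hx₁ : 1 / 2 < |x|) (hx₂ : |x| < 1)
    (hc : |c| ≤ 1) : (1 - |x|) / |x| < |1 - c * x| + |c| * (1 - |x|) := by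
  have h : 1 - |c| * |x| ≤ |1 - c * x| := by
    simpa [abs_mul] using abs_sub_abs_le_abs_sub 1 (c * x)
  rw [div_lt_iff₀ (by linarith)]
  nlinarith [mul_le_mul_of_nonneg_right h (abs_nonneg x),
    mul_nonneg (sub_nonneg.mpr hc) (by linarith : (0 : ℝ) ≤ 2 * |x| - 1),
    mul_pos (sub_pos.mpr hx₂) (by linarith : (0 : ℝ) < 2 * |x| - 1)]

theorem not_propHB_ker_tsumMulCLM {b : ℕ → ℝ} (hb : HasSum (fun n ↦ |b n|) 1) {N : ℕ}
    (hN₁ : 1 / 2 < |b N|) (hN₂ : |b N| < 1) :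
    ¬ propHB (LinearMap.ker (tsumMulCLM b hb.summable : C₀(ℕ, ℝ) →ₗ[ℝ] ℝ)) := by
  set f := tsumMulCLM b hb.summable
  set Y := LinearMap.ker (f : C₀(ℕ, ℝ) →ₗ[ℝ] ℝ)
  intro hHB
  have hdist (c : ℝ) : ‖diracCLM N - c • f‖ = |1 - c * b N| + |c| * (1 - |b N|) :=
    norm_diracCLM_sub_smul hb N c
  obtain ⟨h, hh, hδh, hh_le⟩ := hHB.exists_mem_ann (diracCLM N)
  obtain ⟨c, rfl⟩ := exists_eq_smul_of_mem_ann_ker hh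
  have hc : |c| ≤ 1 := by
    rwa [norm_smul, norm_tsumMulCLM, hb.tsum_eq, norm_diracCLM, Real.norm_eq_abs,
      mul_one] at hh_le
  have hbN : b N ≠ 0 := abs_pos.mp (by linarith)
  have hrestr : ‖restr Y (diracCLM N)‖ ≤ (1 - |b N|) / |b N| := calc
    ‖restr Y (diracCLM N)‖ = ‖restr Y (diracCLM N - (b N)⁻¹ • f)‖ := by
      rw [restr_sub_of_mem_ann fun y hy ↦ by simp [show f y = 0 from hy]]
    _ ≤ ‖diracCLM N - (b N)⁻¹ • f‖ := norm_restr_le _ _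
    _ = (1 - |b N|) / |b N| := by
      rw [hdist, inv_mul_cancel₀ hbN, sub_self, abs_zero, zero_add, abs_inv, inv_mul_eq_div]
  have hlt := one_sub_div_lt_abs_one_sub_mul_add hN₁ hN₂ hc
  rw [← hdist, hδh] at hlt
  exact hlt.not_ge hrestr

theorem stmt12_general (a : lp (fun _ : ℕ => ℝ) 1) (ha1 : ‖a‖ = 1)
    (hsup₂ : (⨆ n, |a n|) < 1)
    (N : ℕ) (hN : (1 : ℝ) / 2 < |a N|)
    (f : StrongDual ℝ C₀(ℕ, ℝ)) (hf : ∀ x : C₀(ℕ, ℝ), f x = ∑' n, a n * x n) :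
    ¬ propHB (LinearMap.ker (f : C₀(ℕ, ℝ) →ₗ[ℝ] ℝ)) ∧
      (∃ x : lp (fun _ : ℕ => ℝ) 1, ‖x‖ ≤ 1 ∧ ‖((x N / a N) : ℝ) • a‖ > 1) := by
  have ha : HasSum (fun n ↦ |a n|) 1 := by
    simpa [ha1, Real.norm_eq_abs] using lp.hasSum_norm (p := 1) (by norm_num) a
  have hbdd : BddAbove (range fun n ↦ |a n|) :=
    ⟨1, by rintro _ ⟨n, rfl⟩; exact le_hasSum ha n fun _ _ ↦ abs_nonneg _⟩
  have haN : |a N| < 1 := (le_ciSup hbdd N).trans_lt hsup₂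
  have hfa : f = tsumMulCLM (⇑a) ha.summable := ContinuousLinearMap.ext hf
  refine ⟨by rw [hfa]; exact not_propHB_ker_tsumMulCLM ha hN haN, lp.single 1 N 1, ?_, ?_⟩
  · rw [lp.norm_single (by norm_num), norm_one]
  · rw [lp.single_apply_self, norm_smul, ha1, mul_one, Real.norm_eq_abs, abs_div, abs_one,
      gt_iff_lt, one_lt_div (by linarith)]
    exact haN

/-- for `(aₙ) ∈ ℓ¹` with `‖(aₙ)‖₁ = 1` and `1/2 < sup |aₙ| < 1` (with `N` the
index where `|a_N| > 1/2`), the hyperplane `Y = ker(x ↦ Σ aₙ xₙ)` of `c₀` does not have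
property-(HB): indeed the metric projection `x ↦ (x_N/a_N)·a` onto `Y⊥ = span{a} ⊆ ℓ¹` has
norm strictly greater than `1`. -/
theorem stmt12 (a : lp (fun _ : ℕ => ℝ) 1) (ha1 : ‖a‖ = 1)
    (hsup₁ : (1 : ℝ) / 2 < ⨆ n, |a n|) (hsup₂ : (⨆ n, |a n|) < 1)
    (N : ℕ) (hN : (1 : ℝ) / 2 < |a N|)
    (f : StrongDual ℝ C₀(ℕ, ℝ)) (hf : ∀ x : C₀(ℕ, ℝ), f x = ∑' n, a n * x n) :
    ¬ propHB (LinearMap.ker (f : C₀(ℕ, ℝ) →ₗ[ℝ] ℝ)) ∧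
      (∃ x : lp (fun _ : ℕ => ℝ) 1, ‖x‖ ≤ 1 ∧ ‖((x N / a N) : ℝ) • a‖ > 1) :=
  stmt12_general a ha1 hsup₂ N hN f hf
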